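/- arXiv:2605.05237 — 9 statements merged into one kernel-verified Lean document; each statement's English description precedes it below -/
import Mathlib

section
/- Let p, q be distinct primes and n > 1 an integer. In the ring R = Z/p^n q Z, the elements p^{n-1}q and p are adjacent in Γ''_{0,n}(R) but not adjacent in Γ''_{0,n-1}(R); hence Γ''_{0,n-1}(R) ≠ Γ''_{0,n}(R). -/
/-
A divisor `d` of `N` gives a ring map `ZMod N → ZMod d`, so `(d : ZMod N) ∣ y` forces `d ∣ y`
in `ℕ`. Hence `p ^ n ∤ p ^ (n - 1) * q` and `p ^ (n - 1) * q ∤ p ^ n`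
in `R`, which is adjacency in `Γ''_{0,n}(R)` with exponents `1` and `n`. Conversely, for
exponents `k ≤ n - 1 ≤ (n - 1) m`, the power `p ^ k` always divides `(p ^ (n - 1) * q) ^ m`.
-/

theorem ZMod.natCast_dvd_of_natCast_dvd_natCast {N d y : ℕ} (hd : d ∣ N)
    (h : (d : ZMod N) ∣ (y : ZMod N)) : d ∣ y := by
  have h' := map_dvd (ZMod.castHom hd (ZMod d)) h
  rwa [map_natCast, map_natCast, ZMod.natCast_self, zero_dvd_iff,
    ZMod.natCast_eq_zero_iff] at h'

theorem pow_dvd_pow_mul_pow {M : Type*} [CommMonoid M] (x y : M) {j k m : ℕ}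
    (hk : k ≤ j) (hm : 1 ≤ m) : x ^ k ∣ (x ^ j * y) ^ m := by
  rw [mul_pow, ← pow_mul]
  exact (pow_dvd_pow x (hk.trans (Nat.le_mul_of_pos_right j hm))).mul_right _

theorem stmt_1 (p q : ℕ) (hp : p.Prime) (hq : q.Prime) (hpq : p ≠ q)
    (n : ℕ) (hn : 1 < n) :
    let R := ZMod (p ^ n * q)
    let a : R := (p : R) ^ (n - 1) * (q : R)
    let b : R := (p : R)
    -- a and b are adjacent in Γ''_{0,n}(R)
    (∃ m k : ℕ, 1 ≤ m ∧ m ≤ n ∧ 1 ≤ k ∧ k ≤ n ∧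
      a ^ m ∉ Ideal.span {b ^ k} ∧ b ^ k ∉ Ideal.span {a ^ m}) ∧
    -- but not adjacent in Γ''_{0,n-1}(R)
    ¬(∃ m k : ℕ, 1 ≤ m ∧ m ≤ n - 1 ∧ 1 ≤ k ∧ k ≤ n - 1 ∧
      a ^ m ∉ Ideal.span {b ^ k} ∧ b ^ k ∉ Ideal.span {a ^ m}) := by
  intro R a b
  have hpn : p ^ n = p ^ (n - 1) * p := by rw [← pow_succ]; congr 1; omega
  have ha : a = ((p ^ (n - 1) * q : ℕ) : ZMod (p ^ n * q)) := by push_cast; rfl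
  have hb : b ^ n = ((p ^ n : ℕ) : ZMod (p ^ n * q)) := by push_cast; rfl
  refine ⟨⟨1, n, le_rfl, hn.le, hn.le, le_rfl, ?_, ?_⟩, ?_⟩
  · rw [pow_one, Ideal.mem_span_singleton, ha, hb]
    intro h
    have hdvd : p ^ (n - 1) * p ∣ p ^ (n - 1) * q :=
      hpn ▸ ZMod.natCast_dvd_of_natCast_dvd_natCast (dvd_mul_right _ _) h
    exact hpq ((Nat.prime_dvd_prime_iff_eq hp hq).mp
      (Nat.dvd_of_mul_dvd_mul_left (pow_pos hp.pos _) hdvd))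
  · rw [pow_one, Ideal.mem_span_singleton, ha, hb]
    intro h
    have hqp : p ^ (n - 1) * q ∣ p ^ (n - 1) * p := hpn ▸
      ZMod.natCast_dvd_of_natCast_dvd_natCast
        (mul_dvd_mul_right (Nat.pow_dvd_pow p (n.sub_le 1)) q) h
    exact hpq ((Nat.prime_dvd_prime_iff_eq hq hp).mp
      (Nat.dvd_of_mul_dvd_mul_left (pow_pos hp.pos _) hqp)).symm
  · rintro ⟨m, k, hm, -, -, hk, hmem, -⟩
    exact hmem (Ideal.mem_span_singleton.mpr (pow_dvd_pow_mul_pow _ _ hk hm))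
end

section
/- Let J be a prime ideal of a commutative ring R with identity such that J is not maximal, and let i be a positive integer. If x is a vertex of Γ''_{J,i}(R) (i.e., x ∉ J and xR + J ≠ R), then x² is also a vertex, x² ≠ x, and x and x² are not adjacent; hence Γ''_{J,i}(R) is not a complete graph whenever it has a vertex. -/
theorem stmt_2 {R : Type*} [CommRing R] (J : Ideal R) (hJ : J.IsPrime)
    (hJm : ¬J.IsMaximal) (i : ℕ) (hi : 1 ≤ i)
    (x : R) (hx : x ∉ J) (hx' : Ideal.span {x} ⊔ J ≠ ⊤) :
    (x ^ 2 ∉ J ∧ Ideal.span {x ^ 2} ⊔ J ≠ ⊤) ∧ x ^ 2 ≠ x ∧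
    ¬∃ m k : ℕ, 1 ≤ m ∧ m ≤ i ∧ 1 ≤ k ∧ k ≤ i ∧
      x ^ m ∉ Ideal.span {(x ^ 2) ^ k} ⊔ J ∧ (x ^ 2) ^ k ∉ Ideal.span {x ^ m} ⊔ J := by
  have hspan : Ideal.span {x ^ 2} ≤ Ideal.span {x} := by
    rw [Ideal.span_singleton_le_span_singleton]
    exact ⟨x, sq x⟩
  refine ⟨⟨fun h => hx (hJ.mem_of_pow_mem 2 h), fun h => hx' ?_⟩, ?_, ?_⟩
  · exact top_le_iff.mp (h ▸ sup_le_sup_right hspan J)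
  · intro h
    have hx1 : x - 1 ∈ J := by
      have : x * (x - 1) ∈ J := by
        have : x * (x - 1) = x ^ 2 - x := by ring
        rw [this, h, sub_self]; exact J.zero_mem
      rcases hJ.mem_or_mem this with h' | h'
      · exact absurd h' hx
      · exact h'
    apply hx'
    rw [Ideal.eq_top_iff_one]
    have : (1 : R) = x - (x - 1) := by ring
    rw [this]
    exact Ideal.sub_mem _ (Ideal.mem_sup_left (Ideal.mem_span_singleton_self x))
      (Ideal.mem_sup_right hx1)
  · rintro ⟨m, k, hm1, hmi, hk1, hki, hA, hB⟩
    rcases le_total m (2 * k) with hle | hle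
    · apply hB
      apply Ideal.mem_sup_left
      rw [Ideal.mem_span_singleton, ← pow_mul]
      exact ⟨x ^ (2 * k - m), by rw [← pow_add, Nat.add_sub_cancel' hle]⟩
    · apply hA
      apply Ideal.mem_sup_left
      rw [Ideal.mem_span_singleton, ← pow_mul]
      exact ⟨x ^ (m - 2 * k), by rw [← pow_add, Nat.add_sub_cancel' hle]⟩
end

section
/- Let R be a commutative ring with identity, J an ideal with J ⊆ Jac(R) (the Jacobson radical), and x a non-unit of R with x ∉ Jac(R) such that x^n = x^{n+1} for some positive integer n. Then 1 - x ∉ Rx^n + J and x^n ∉ R(1-x) + J. -/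
/-!
The element `e = x ^ n` is idempotent and annihilates `1 - x`. Multiplying a relation
`1 - x = r e + j` or `e = s (1 - x) + j` by `e` pushes the left-hand side into `J ⊆ Jac R`.
In the first case `x = 1 - (1 - x)` is then a unit; in the second `x ∈ Jac R`, since the
Jacobson radical is a radical ideal.
-/

theorem pow_mul_pow_eq_self_of_pow_eq_pow_succ {M : Type*} [Monoid M] {x : M} {n : ℕ}
    (h : x ^ n = x ^ (n + 1)) (k : ℕ) : x ^ n * x ^ k = x ^ n := by
  induction k with
  | zero => rw [pow_zero, mul_one]
  | succ k ih => rw [pow_succ, ← mul_assoc, ih, ← pow_succ, ← h]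

theorem isIdempotentElem_pow_of_pow_eq_pow_succ {M : Type*} [Monoid M] {x : M} {n : ℕ}
    (h : x ^ n = x ^ (n + 1)) : IsIdempotentElem (x ^ n) :=
  pow_mul_pow_eq_self_of_pow_eq_pow_succ h n

namespace IsIdempotentElem

theorem mem_of_mem_span_self_sup {R : Type*} [CommRing R] {e y : R} {J : Ideal R}
    (he : IsIdempotentElem e) (hey : e * y = 0) (hy : y ∈ Ideal.span {e} ⊔ J) : y ∈ J := by
  obtain ⟨r, j, hj, rfl⟩ := Ideal.mem_span_singleton_sup.mp hy
  have hre : r * e = -(e * j) := by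
    rw [eq_neg_iff_add_eq_zero, ← hey, mul_add, mul_left_comm, he.eq]
  rw [hre]
  exact J.add_mem (J.neg_mem (J.mul_mem_left e hj)) hj

theorem mem_of_self_mem_span_sup {R : Type*} [CommSemiring R] {e y : R} {J : Ideal R}
    (he : IsIdempotentElem e) (hey : e * y = 0) (h : e ∈ Ideal.span {y} ⊔ J) : e ∈ J := by
  obtain ⟨s, j, hj, hs⟩ := Ideal.mem_span_singleton_sup.mp h
  have hej : e = e * j := by
    conv_lhs => rw [← he.eq]
    nth_rw 2 [← hs]
    rw [mul_add, mul_left_comm, hey, mul_zero, zero_add]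
  rw [hej]
  exact J.mul_mem_left e hj

end IsIdempotentElem

theorem stmt_4_general {R : Type*} [CommRing R] (J : Ideal R)
    (hJ : J ≤ (⊥ : Ideal R).jacobson) (x : R) (hxu : ¬IsUnit x)
    (hxj : x ∉ (⊥ : Ideal R).jacobson) (n : ℕ)
    (hxn : x ^ n = x ^ (n + 1)) :
    1 - x ∉ Ideal.span {x ^ n} ⊔ J ∧ x ^ n ∉ Ideal.span {1 - x} ⊔ J := by
  have he := isIdempotentElem_pow_of_pow_eq_pow_succ hxn
  have hann : x ^ n * (1 - x) = 0 := by rw [mul_sub, mul_one, ← pow_succ, ← hxn, sub_self]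
  refine ⟨fun h => hxu ?_, fun h => hxj ?_⟩
  · refine Ideal.isUnit_of_sub_one_mem_jacobson_bot x ?_
    rw [← neg_sub]
    exact neg_mem (hJ (he.mem_of_mem_span_self_sup hann h))
  · exact Ideal.isRadical_jacobson ⊥ ⟨n, hJ (he.mem_of_self_mem_span_sup hann h)⟩

theorem stmt_4 {R : Type*} [CommRing R] (J : Ideal R)
    (hJ : J ≤ (⊥ : Ideal R).jacobson) (x : R) (hxu : ¬IsUnit x)
    (hxj : x ∉ (⊥ : Ideal R).jacobson) (n : ℕ) (hn : 1 ≤ n)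
    (hxn : x ^ n = x ^ (n + 1)) :
    1 - x ∉ Ideal.span {x ^ n} ⊔ J ∧ x ^ n ∉ Ideal.span {1 - x} ⊔ J :=
  stmt_4_general J hJ x hxu hxj n hxn
end

section
/- Let J be a proper ideal of a commutative ring R with identity and x ∈ R. If for some positive integer n we have x^{n+1} = x^n, x^n ∉ J, and Rx^n + J ≠ R, then 1 - x ∉ J and R(1-x) + J ≠ R. -/
theorem stmt_5 {R : Type*} [CommRing R] (J : Ideal R) (hJ : J ≠ ⊤)
    (x : R) (n : ℕ) (hn : 1 ≤ n) (hxn : x ^ (n + 1) = x ^ n)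
    (h1 : x ^ n ∉ J) (h2 : Ideal.span {x ^ n} ⊔ J ≠ ⊤) :
    1 - x ∉ J ∧ Ideal.span {1 - x} ⊔ J ≠ ⊤ := by
  constructor
  · intro hx
    apply h2
    -- 1 - x^n ∈ J since (1-x) ∣ 1 - x^n
    have hdvd : (1 : R) - x ∣ 1 - x ^ n := by
      have := sub_dvd_pow_sub_pow (1 : R) x n
      simpa using this
    obtain ⟨c, hc⟩ := hdvd
    have hmem : (1 : R) - x ^ n ∈ J := by
      rw [hc]; exact J.mul_mem_right c hx
    rw [Ideal.eq_top_iff_one]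
    have : (1 : R) = x ^ n + (1 - x ^ n) := by ring
    rw [this]
    exact Submodule.add_mem_sup (Ideal.subset_span rfl) hmem
  · intro htop
    apply h1
    have h1mem : (1 : R) ∈ Ideal.span {1 - x} ⊔ J := by rw [htop]; trivial
    obtain ⟨y, hy, z, hz, hyz⟩ := Submodule.mem_sup.mp h1mem
    obtain ⟨r, hr⟩ := Ideal.mem_span_singleton'.mp hy
    have hx0 : x ^ n = x ^ n * z := by
      linear_combination (-(x ^ n)) * hyz - x ^ n * hr - r * hxn
    rw [hx0]
    exact J.mul_mem_left _ hz
end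

section
/- Let J be an ideal of a commutative ring R with identity. If the edge sets of Γ''_{J,2}(R) and Γ''_{J,1}(R) coincide, then for every x ∈ R and every positive integer i, if 1 - x ∉ Rx^{2i} + J, x^{2i} ∉ R(1-x) + J, and 1-x and x^i are distinct vertices of Γ''_{J,2}(R), then 1 - x ∉ Rx^i + J and x^i ∉ R(1-x) + J. -/
theorem stmt_9 {R : Type*} [CommRing R] (J : Ideal R)
    (hEq : ∀ x y : R, x ∉ J → Ideal.span {x} ⊔ J ≠ ⊤ →
      y ∉ J → Ideal.span {y} ⊔ J ≠ ⊤ → x ≠ y →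
      ((∃ m k : ℕ, 1 ≤ m ∧ m ≤ 2 ∧ 1 ≤ k ∧ k ≤ 2 ∧
          x ^ m ∉ Ideal.span {y ^ k} ⊔ J ∧ y ^ k ∉ Ideal.span {x ^ m} ⊔ J) ↔
        (x ∉ Ideal.span {y} ⊔ J ∧ y ∉ Ideal.span {x} ⊔ J))) :
    ∀ (x : R) (i : ℕ), 1 ≤ i →
      1 - x ∉ Ideal.span {x ^ (2 * i)} ⊔ J →
      x ^ (2 * i) ∉ Ideal.span {1 - x} ⊔ J →
      1 - x ∉ J → Ideal.span {1 - x} ⊔ J ≠ ⊤ →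
      x ^ i ∉ J → Ideal.span {x ^ i} ⊔ J ≠ ⊤ →
      1 - x ≠ x ^ i →
      1 - x ∉ Ideal.span {x ^ i} ⊔ J ∧ x ^ i ∉ Ideal.span {1 - x} ⊔ J := by
  intro x i hi h1 h2 h3 h4 h5 h6 h7
  have hpow : (x ^ i) ^ 2 = x ^ (2 * i) := by
    rw [← pow_mul, mul_comm]
  apply (hEq (1 - x) (x ^ i) h3 h4 h5 h6 h7).mp
  refine ⟨1, 2, le_refl 1, one_le_two, one_le_two, le_refl 2, ?_, ?_⟩
  · rw [pow_one, hpow]; exact h1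
  · rw [pow_one, hpow]; exact h2
end

section
/- Let R be a commutative ring with identity having exactly two maximal ideals m₁ and m₂, and let J ⊆ Jac(R) be an ideal. If x ∈ m₁ \ m₂ and y ∈ m₂ \ m₁, then x ∉ Ry + J and y ∉ Rx + J; in particular x and y are adjacent in Γ''_{J,i}(R) for every positive integer i. -/
theorem stmt_10 {R : Type*} [CommRing R] (m₁ m₂ : Ideal R)
    (hm₁ : m₁.IsMaximal) (hm₂ : m₂.IsMaximal) (hne : m₁ ≠ m₂)
    (honly : ∀ m : Ideal R, m.IsMaximal → m = m₁ ∨ m = m₂)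
    (J : Ideal R) (hJ : J ≤ (⊥ : Ideal R).jacobson)
    (x y : R) (hx1 : x ∈ m₁) (hx2 : x ∉ m₂) (hy2 : y ∈ m₂) (hy1 : y ∉ m₁) :
    x ∉ Ideal.span {y} ⊔ J ∧ y ∉ Ideal.span {x} ⊔ J ∧
    ∀ i : ℕ, 1 ≤ i → ∃ m k : ℕ, 1 ≤ m ∧ m ≤ i ∧ 1 ≤ k ∧ k ≤ i ∧
      x ^ m ∉ Ideal.span {y ^ k} ⊔ J ∧ y ^ k ∉ Ideal.span {x ^ m} ⊔ J := by
  have hJ1 : J ≤ m₁ := hJ.trans (sInf_le ⟨bot_le, hm₁⟩)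
  have hJ2 : J ≤ m₂ := hJ.trans (sInf_le ⟨bot_le, hm₂⟩)
  have h1 : x ∉ Ideal.span {y} ⊔ J := fun h =>
    hx2 (sup_le ((Ideal.span_le).2 (by simpa using hy2)) hJ2 h)
  have h2 : y ∉ Ideal.span {x} ⊔ J := fun h =>
    hy1 (sup_le ((Ideal.span_le).2 (by simpa using hx1)) hJ1 h)
  exact ⟨h1, h2, fun i hi => ⟨1, 1, le_refl 1, hi, le_refl 1, hi,
    by simpa using h1, by simpa using h2⟩⟩
end

section
/- Let J be an ideal of a commutative ring R with identity and i a positive integer. If Γ''_{J,i}(R) is a complete graph, then the i-extended ideal-based zero-divisor graph Γ_{J,i}(R) is also a complete graph. -/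
section Aux

variable {R : Type*} [CommRing R] (J : Ideal R)

/-- A zero-divisor mod `J` generates a proper ideal together with `J`. -/
lemma aux_vertex {x : R} (h : ∃ z : R, z ∉ J ∧ x * z ∈ J) :
    Ideal.span {x} ⊔ J ≠ ⊤ := by
  obtain ⟨z, hz, hxz⟩ := h
  intro htop
  apply hz
  have h1 : (1 : R) ∈ Ideal.span {x} ⊔ J := htop ▸ Submodule.mem_top
  rw [Submodule.mem_sup] at h1
  obtain ⟨a, ha, b, hb, hab⟩ := h1
  rw [Ideal.mem_span_singleton] at ha
  obtain ⟨r, rfl⟩ := ha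
  have : z = r * (x * z) + z * b := by linear_combination (-z) * hab
  rw [this]
  exact J.add_mem (J.mul_mem_left r hxz) (J.mul_mem_left z hb)

end Aux

theorem stmt_11 {R : Type*} [CommRing R] (J : Ideal R) (i : ℕ) (hi : 1 ≤ i)
    (hcomp : ∀ x y : R, x ∉ J → Ideal.span {x} ⊔ J ≠ ⊤ →
      y ∉ J → Ideal.span {y} ⊔ J ≠ ⊤ → x ≠ y →
      ∃ m k : ℕ, 1 ≤ m ∧ m ≤ i ∧ 1 ≤ k ∧ k ≤ i ∧
        x ^ m ∉ Ideal.span {y ^ k} ⊔ J ∧ y ^ k ∉ Ideal.span {x ^ m} ⊔ J) :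
    ∀ x y : R, x ∉ J → (∃ z : R, z ∉ J ∧ x * z ∈ J) →
      y ∉ J → (∃ z : R, z ∉ J ∧ y * z ∈ J) → x ≠ y →
      ∃ n m : ℕ, 1 ≤ n ∧ n ≤ i ∧ 1 ≤ m ∧ m ≤ i ∧
        x ^ n * y ^ m ∈ J ∧ x ^ n ∉ J ∧ y ^ m ∉ J := by
  intro x y hx hxz hy hyz hxy
  have hxv : Ideal.span {x} ⊔ J ≠ ⊤ := aux_vertex J hxz
  have hyv : Ideal.span {y} ⊔ J ≠ ⊤ := aux_vertex J hyz
  -- dichotomy: every vertex is square-in-J or idempotent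
  have dich : ∀ v : R, v ∉ J → Ideal.span {v} ⊔ J ≠ ⊤ → v ^ 2 ∈ J ∨ v ^ 2 = v := by
    intro v hv hvv
    by_contra hcon
    push_neg at hcon
    obtain ⟨h2J, h2v⟩ := hcon
    have hv2v : Ideal.span {v ^ 2} ⊔ J ≠ ⊤ := by
      intro htop
      apply hvv
      rw [← top_le_iff, ← htop]
      exact sup_le_sup_right (Ideal.span_singleton_le_span_singleton.mpr
        (dvd_pow_self v two_ne_zero)) J
    obtain ⟨m, k, hm1, hmi, hk1, hki, h1, h2⟩ :=
      hcomp v (v ^ 2) hv hvv h2J hv2v (Ne.symm h2v)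
    rw [← pow_mul] at h1 h2
    rcases le_total m (2 * k) with h | h
    · exact h2 (Ideal.mem_sup_left (Ideal.mem_span_singleton.mpr (pow_dvd_pow v h)))
    · exact h1 (Ideal.mem_sup_left (Ideal.mem_span_singleton.mpr (pow_dvd_pow v h)))
  -- key lemma A: if u² ∈ J then u*w ∈ J for any other vertex w
  have keyA : ∀ u w : R, u ∉ J → Ideal.span {u} ⊔ J ≠ ⊤ →
      w ∉ J → Ideal.span {w} ⊔ J ≠ ⊤ → u ≠ w → u ^ 2 ∈ J → u * w ∈ J := by
    intro u w hu huv hw hwv huw hu2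
    have hpow : ∀ m : ℕ, 2 ≤ m → u ^ m ∈ J := by
      intro m hm
      have : u ^ m = u ^ 2 * u ^ (m - 2) := by
        rw [← pow_add]; congr 1; omega
      rw [this]
      exact J.mul_mem_right _ hu2
    by_contra huwJ
    by_cases heq : u * w = u
    · -- then u * w^k = u for all k, contradicting adjacency of u, w
      have hk : ∀ k : ℕ, u * w ^ (k + 1) = u := by
        intro k
        induction k with
        | zero => simpa using heq
        | succ n ih => rw [pow_succ, ← mul_assoc, ih, heq]
      obtain ⟨m, k, hm1, hmi, hk1, hki, h1, h2⟩ := hcomp u w hu huv hw hwv huw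
      rcases Nat.lt_or_ge m 2 with hm | hm
      · have hm1' : m = 1 := by omega
        subst hm1'
        apply h1
        apply Ideal.mem_sup_left
        rw [Ideal.mem_span_singleton]
        obtain ⟨k', rfl⟩ : ∃ k', k = k' + 1 := ⟨k - 1, by omega⟩
        exact ⟨u, by rw [pow_one, mul_comm, hk]⟩
      · exact h1 (Ideal.mem_sup_right (hpow m hm))
    · have huwv : Ideal.span {u * w} ⊔ J ≠ ⊤ := by
        intro htop
        apply huv
        rw [← top_le_iff, ← htop]
        exact sup_le_sup_right (Ideal.span_singleton_le_span_singleton.mpr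
          (Dvd.intro w rfl)) J
      obtain ⟨m, k, hm1, hmi, hk1, hki, h1, h2⟩ :=
        hcomp u (u * w) hu huv huwJ huwv (fun h => heq h.symm)
      rcases Nat.lt_or_ge m 2 with hm | hm
      · have hm1' : m = 1 := by omega
        subst hm1'
        apply h2
        apply Ideal.mem_sup_left
        rw [Ideal.mem_span_singleton, pow_one, mul_pow]
        exact Dvd.dvd.mul_right (dvd_pow_self u (by omega)) _
      · exact h1 (Ideal.mem_sup_right (hpow m hm))
  -- now main case analysis
  refine ⟨1, 1, le_refl 1, hi, le_refl 1, hi, ?_, by simpa using hx, by simpa using hy⟩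
  rw [pow_one, pow_one]
  rcases dich x hx hxv with hx2 | hx2
  · exact keyA x y hx hxv hy hyv hxy hx2
  · rcases dich y hy hyv with hy2 | hy2
    · rw [mul_comm]; exact keyA y x hy hyv hx hxv hxy.symm hy2
    · -- both idempotent
      have hxp : ∀ m : ℕ, 1 ≤ m → x ^ m = x := by
        intro m hm
        obtain ⟨m', rfl⟩ : ∃ m', m = m' + 1 := ⟨m - 1, by omega⟩
        exact (IsIdempotentElem.pow_succ_eq m' (by rwa [IsIdempotentElem, ← sq]))
      have hyp : ∀ m : ℕ, 1 ≤ m → y ^ m = y := by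
        intro m hm
        obtain ⟨m', rfl⟩ : ∃ m', m = m' + 1 := ⟨m - 1, by omega⟩
        exact (IsIdempotentElem.pow_succ_eq m' (by rwa [IsIdempotentElem, ← sq]))
      by_contra hxyJ
      have hxyv : Ideal.span {x * y} ⊔ J ≠ ⊤ := by
        intro htop
        apply hxv
        rw [← top_le_iff, ← htop]
        exact sup_le_sup_right (Ideal.span_singleton_le_span_singleton.mpr
          (Dvd.intro y rfl)) J
      by_cases heq : x * y = x
      · -- x*y ≠ y ; use adjacency of y and x*y
        have hne : y ≠ x * y := fun h => hxy (h.trans heq).symm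
        obtain ⟨m, k, hm1, hmi, hk1, hki, h1, h2⟩ :=
          hcomp y (x * y) hy hyv hxyJ hxyv hne
        apply h2
        apply Ideal.mem_sup_left
        rw [Ideal.mem_span_singleton, hyp m hm1, mul_pow, hyp k hk1]
        exact Dvd.dvd.mul_left dvd_rfl _
      · obtain ⟨m, k, hm1, hmi, hk1, hki, h1, h2⟩ :=
          hcomp x (x * y) hx hxv hxyJ hxyv (fun h => heq h.symm)
        apply h2
        apply Ideal.mem_sup_left
        rw [Ideal.mem_span_singleton, hxp m hm1, mul_pow, hxp k hk1]
        exact Dvd.dvd.mul_right dvd_rfl _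
end

section
/- In R = Z/2Z[X,Y], the elements X and XY satisfy: XY ∉ X²R and X² ∉ XY·R (so X and XY are adjacent in Γ''_{0,2}(R)), while XY ∈ XR (so they are not adjacent in Γ''_{0,1}(R)). -/
theorem stmt_13 :
    let R := MvPolynomial (Fin 2) (ZMod 2)
    let X : R := MvPolynomial.X 0
    let Y : R := MvPolynomial.X 1
    X * Y ∉ Ideal.span {X ^ 2} ∧ X ^ 2 ∉ Ideal.span {X * Y} ∧
    X * Y ∈ Ideal.span {X} := by
  intro R X Y
  refine ⟨?_, ?_, ?_⟩
  · rw [Ideal.mem_span_singleton]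
    intro h
    have h2 := map_dvd (MvPolynomial.aeval
      (![Polynomial.X, 1] : Fin 2 → Polynomial (ZMod 2))).toRingHom h
    simp only [X, Y, map_mul, map_pow, AlgHom.toRingHom_eq_coe, RingHom.coe_coe,
      MvPolynomial.aeval_X, Matrix.cons_val_zero, Matrix.cons_val_one, Matrix.head_cons,
      mul_one] at h2
    have := Polynomial.degree_le_of_dvd h2 Polynomial.X_ne_zero
    rw [Polynomial.degree_X_pow, Polynomial.degree_X] at this
    exact absurd this (by decide)
  · rw [Ideal.mem_span_singleton]
    intro h
    have h2 := map_dvd (MvPolynomial.aeval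
      (![Polynomial.X, 0] : Fin 2 → Polynomial (ZMod 2))).toRingHom h
    simp only [X, Y, map_mul, map_pow, AlgHom.toRingHom_eq_coe, RingHom.coe_coe,
      MvPolynomial.aeval_X, Matrix.cons_val_zero, Matrix.cons_val_one, Matrix.head_cons,
      mul_zero, zero_dvd_iff] at h2
    exact pow_ne_zero 2 Polynomial.X_ne_zero h2
  · rw [Ideal.mem_span_singleton]
    exact dvd_mul_right X Y
end

section
/- Let R be a commutative ring with identity, J an ideal with J ⊆ Jac(R), and suppose R has exactly two maximal ideals m₁, m₂. Fix a positive integer i. Then: the graph Γ''_{J,i}(R) restricted to vertices outside Jac(R) is complete bipartite with parts m₁ \ Jac(R) and m₂ \ Jac(R) if and only if for every j ∈ {1,2} and every x, y ∈ m_j \ Jac(R), the ideals Rx^n + J and Ry^m + J are comparable (one contains the other) for all positive integers n, m ≤ i. -/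
/-- Adjacency in the `i`-extended ideal-based cozero-divisor graph `Γ''_{J,i}(R)`. -/
def CozeroAdj {R : Type*} [CommRing R] (J : Ideal R) (i : ℕ) (x y : R) : Prop :=
  ∃ m k : ℕ, 1 ≤ m ∧ m ≤ i ∧ 1 ≤ k ∧ k ≤ i ∧
    x ^ m ∉ Ideal.span {y ^ k} ⊔ J ∧ y ^ k ∉ Ideal.span {x ^ m} ⊔ J

lemma mem_to_le {R : Type*} [CommRing R] {J I : Ideal R} {a : R}
    (h : a ∈ I ⊔ J) : Ideal.span {a} ⊔ J ≤ I ⊔ J := by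
  exact sup_le ((Ideal.span_singleton_le_iff_mem _).mpr h) le_sup_right

theorem stmt_14 {R : Type*} [CommRing R] (m₁ m₂ : Ideal R)
    (hm₁ : m₁.IsMaximal) (hm₂ : m₂.IsMaximal) (hne : m₁ ≠ m₂)
    (honly : ∀ m : Ideal R, m.IsMaximal → m = m₁ ∨ m = m₂)
    (J : Ideal R) (hJ : J ≤ (⊥ : Ideal R).jacobson)
    (i : ℕ) (hi : 1 ≤ i) :
    ((∀ x y : R, x ∈ m₁ → x ∉ (⊥ : Ideal R).jacobson →
        y ∈ m₁ → y ∉ (⊥ : Ideal R).jacobson → x ≠ y → ¬CozeroAdj J i x y) ∧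
     (∀ x y : R, x ∈ m₂ → x ∉ (⊥ : Ideal R).jacobson →
        y ∈ m₂ → y ∉ (⊥ : Ideal R).jacobson → x ≠ y → ¬CozeroAdj J i x y) ∧
     (∀ x y : R, x ∈ m₁ → x ∉ (⊥ : Ideal R).jacobson →
        y ∈ m₂ → y ∉ (⊥ : Ideal R).jacobson → CozeroAdj J i x y)) ↔
    (∀ m : Ideal R, (m = m₁ ∨ m = m₂) →
      ∀ x y : R, x ∈ m → x ∉ (⊥ : Ideal R).jacobson →
        y ∈ m → y ∉ (⊥ : Ideal R).jacobson →
        ∀ n k : ℕ, 1 ≤ n → n ≤ i → 1 ≤ k → k ≤ i →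
          Ideal.span {x ^ n} ⊔ J ≤ Ideal.span {y ^ k} ⊔ J ∨
          Ideal.span {y ^ k} ⊔ J ≤ Ideal.span {x ^ n} ⊔ J) := by
  have hjac_le : ∀ m : Ideal R, m.IsMaximal → (⊥ : Ideal R).jacobson ≤ m := by
    intro m hm
    exact sInf_le ⟨bot_le, hm⟩
  have hinf : m₁ ⊓ m₂ ≤ (⊥ : Ideal R).jacobson := by
    apply le_sInf
    rintro m ⟨-, hm⟩
    rcases honly m hm with rfl | rfl
    · exact inf_le_left
    · exact inf_le_right
  constructor
  · rintro ⟨h1, h2, -⟩ m hm x y hx hxj hy hyj n k hn1 hni hk1 hki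
    -- case x = y
    by_cases hxy : x = y
    · subst hxy
      rcases le_total n k with h | h
      · right
        apply mem_to_le
        exact Ideal.mem_sup_left (Ideal.mem_span_singleton.mpr (pow_dvd_pow x h))
      · left
        apply mem_to_le
        exact Ideal.mem_sup_left (Ideal.mem_span_singleton.mpr (pow_dvd_pow x h))
    · have hna : ¬CozeroAdj J i x y := by
        rcases hm with rfl | rfl
        · exact h1 x y hx hxj hy hyj hxy
        · exact h2 x y hx hxj hy hyj hxy
      rw [CozeroAdj] at hna
      push_neg at hna
      rcases Classical.em (x ^ n ∈ Ideal.span {y ^ k} ⊔ J) with h | h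
      · exact Or.inl (mem_to_le h)
      · exact Or.inr (mem_to_le (hna n k hn1 hni hk1 hki h))
  · intro h
    refine ⟨?_, ?_, ?_⟩
    · intro x y hx hxj hy hyj hxy hadj
      obtain ⟨n, k, hn1, hni, hk1, hki, ha, hb⟩ := hadj
      rcases h m₁ (Or.inl rfl) x y hx hxj hy hyj n k hn1 hni hk1 hki with hle | hle
      · exact ha (hle (Ideal.mem_sup_left (Ideal.mem_span_singleton_self _)))
      · exact hb (hle (Ideal.mem_sup_left (Ideal.mem_span_singleton_self _)))
    · intro x y hx hxj hy hyj hxy hadj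
      obtain ⟨n, k, hn1, hni, hk1, hki, ha, hb⟩ := hadj
      rcases h m₂ (Or.inr rfl) x y hx hxj hy hyj n k hn1 hni hk1 hki with hle | hle
      · exact ha (hle (Ideal.mem_sup_left (Ideal.mem_span_singleton_self _)))
      · exact hb (hle (Ideal.mem_sup_left (Ideal.mem_span_singleton_self _)))
    · intro x y hx hxj hy hyj
      have hx2 : x ∉ m₂ := fun h2 => hxj (hinf ⟨hx, h2⟩)
      have hy1 : y ∉ m₁ := fun h1 => hyj (hinf ⟨h1, hy⟩)
      refine ⟨1, 1, le_refl 1, hi, le_refl 1, hi, ?_, ?_⟩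
      · intro hmem
        apply hx2
        have : Ideal.span {y ^ 1} ⊔ J ≤ m₂ := by
          apply sup_le
          · rw [Ideal.span_singleton_le_iff_mem, pow_one]
            exact hy
          · exact le_trans hJ (hjac_le m₂ hm₂)
        simpa using this hmem
      · intro hmem
        apply hy1
        have : Ideal.span {x ^ 1} ⊔ J ≤ m₁ := by
          apply sup_le
          · rw [Ideal.span_singleton_le_iff_mem, pow_one]
            exact hx
          · exact le_trans hJ (hjac_le m₁ hm₁)
        simpa using this hmem
end
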